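/- Let w be a word of length n ≥ 1 with last letter h = w_n. For any letter a, the word w·a avoids both patterns 1-11 and 1-12 if and only if w avoids both patterns and, in addition, either h occurs only once in w, or a < h. -/
import Mathlib


/-- `w` contains the generalized pattern 1-11: ∃ i < j < n with w i = w j = w (j+1). -/
def Contains111 {n m : ℕ} (w : Fin n → Fin m) : Prop :=
  ∃ i j k : Fin n, i < j ∧ (j : ℕ) + 1 = (k : ℕ) ∧ w i = w j ∧ w j = w k

/-- `w` contains the generalized pattern 1-12: ∃ i < j < n with w i = w j < w (j+1). -/
def Contains112 {n m : ℕ} (w : Fin n → Fin m) : Prop :=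
  ∃ i j k : Fin n, i < j ∧ (j : ℕ) + 1 = (k : ℕ) ∧ w i = w j ∧ w j < w k

private lemma snoc_val {n m : ℕ} (w : Fin n → Fin m) (a : Fin m) (i : Fin (n+1))
    (hi : (i : ℕ) < n) : (Fin.snoc w a : Fin (n+1) → Fin m) i = w ⟨i, hi⟩ := by
  have e : i = Fin.castSucc ⟨i, hi⟩ := Fin.ext rfl
  conv_lhs => rw [e]
  exact Fin.snoc_castSucc (α := fun _ => Fin m) a w ⟨i, hi⟩

theorem appending_avoids_111_112 {n m : ℕ} (hn : 1 ≤ n) (w : Fin n → Fin m) (a : Fin m)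
    (h : Fin m) (hh : h = w ⟨n - 1, by omega⟩) :
    (¬ Contains111 (Fin.snoc w a) ∧ ¬ Contains112 (Fin.snoc w a)) ↔
      ((¬ Contains111 w ∧ ¬ Contains112 w) ∧
        ((∃! i : Fin n, w i = h) ∨ a < h)) := by
  constructor
  · rintro ⟨hA, hB⟩
    refine ⟨⟨?_, ?_⟩, ?_⟩
    · rintro ⟨i, j, k, hij, hjk, h1, h2⟩
      exact hA ⟨i.castSucc, j.castSucc, k.castSucc, by simpa using hij, by simpa using hjk,
        by simpa using h1, by simpa using h2⟩
    · rintro ⟨i, j, k, hij, hjk, h1, h2⟩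
      exact hB ⟨i.castSucc, j.castSucc, k.castSucc, by simpa using hij, by simpa using hjk,
        by simpa using h1, by simpa using h2⟩
    · by_contra hc
      push_neg at hc
      obtain ⟨hne, hge⟩ := hc
      set p : Fin n := ⟨n - 1, by omega⟩ with hp
      have h0 : ¬ (w p = h ∧ ∀ y, w y = h → y = p) := fun hx => hne ⟨p, hx⟩
      push_neg at h0
      obtain ⟨y, hy, hyne⟩ := h0 hh.symm
      have hylt : y < p := by
        rw [Fin.lt_def]
        have h1 : (y : ℕ) ≠ n - 1 := fun hv => hyne (Fin.ext hv)
        have := y.isLt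
        simp only [hp]
        omega
      have e1 : (Fin.snoc w a : Fin (n+1) → Fin m) y.castSucc = h := by rw [Fin.snoc_castSucc (α := fun _ => Fin m)]; exact hy
      have e2 : (Fin.snoc w a : Fin (n+1) → Fin m) p.castSucc = h := by rw [Fin.snoc_castSucc (α := fun _ => Fin m)]; exact hh.symm
      have e3 : (Fin.snoc w a : Fin (n+1) → Fin m) (Fin.last n) = a := Fin.snoc_last (α := fun _ => Fin m) a w
      have hjk' : ((p.castSucc : Fin (n+1)) : ℕ) + 1 = ((Fin.last n : Fin (n+1)) : ℕ) := by
        simp [hp]; omega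
      rcases eq_or_lt_of_le hge with heq | hlt
      · exact hA ⟨y.castSucc, p.castSucc, Fin.last n, by simpa using hylt, hjk',
          by rw [e1, e2], by rw [e2, e3, heq]⟩
      · exact hB ⟨y.castSucc, p.castSucc, Fin.last n, by simpa using hylt, hjk',
          by rw [e1, e2], by rw [e2, e3]; exact hlt⟩
  · rintro ⟨⟨hA, hB⟩, hC⟩
    have key : ∀ (i j k : Fin (n+1)), i < j → (j : ℕ) + 1 = (k : ℕ) →
        (Fin.snoc w a : Fin (n+1) → Fin m) i = (Fin.snoc w a : Fin (n+1) → Fin m) j →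
        (((Fin.snoc w a : Fin (n+1) → Fin m) j = (Fin.snoc w a : Fin (n+1) → Fin m) k → False) ∧
          ((Fin.snoc w a : Fin (n+1) → Fin m) j < (Fin.snoc w a : Fin (n+1) → Fin m) k → False)) ∨
        (∃ i' j' k' : Fin n, i' < j' ∧ (j' : ℕ) + 1 = (k' : ℕ) ∧ w i' = w j' ∧
          (Fin.snoc w a : Fin (n+1) → Fin m) j = w j' ∧ (Fin.snoc w a : Fin (n+1) → Fin m) k = w k') := by
      intro i j k hij hjk h1
      by_cases hk : (k : ℕ) < n
      · right
        have hj : (j : ℕ) < n := by omega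
        have hi : (i : ℕ) < n := by rw [Fin.lt_def] at hij; omega
        rw [snoc_val w a i hi, snoc_val w a j hj] at h1
        refine ⟨⟨i, hi⟩, ⟨j, hj⟩, ⟨k, hk⟩, ?_, ?_, h1, snoc_val w a j hj, snoc_val w a k hk⟩
        · exact Fin.mk_lt_mk.mpr (by rw [Fin.lt_def] at hij; omega)
        · exact hjk
      · left
        have hkn : (k : ℕ) = n := by have := k.isLt; omega
        have hj : (j : ℕ) < n := by omega
        have hjv : (j : ℕ) = n - 1 := by omega
        have hi : (i : ℕ) < n := by rw [Fin.lt_def] at hij; omega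
        have hiv : (i : ℕ) < n - 1 := by rw [Fin.lt_def] at hij; omega
        rw [snoc_val w a i hi, snoc_val w a j hj] at h1
        have hjh : w ⟨j, hj⟩ = h := by
          rw [hh]; exact congrArg w (Fin.ext hjv)
        have hka : (Fin.snoc w a : Fin (n+1) → Fin m) k = a := by
          have : k = Fin.last n := Fin.ext hkn
          rw [this]; exact Fin.snoc_last (α := fun _ => Fin m) a w
        have hja : (Fin.snoc w a : Fin (n+1) → Fin m) j = h := (snoc_val w a j hj).trans hjh
        rcases hC with ⟨u, hu, huniq⟩ | hlt
        · exfalso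
          have eI : (⟨(i : ℕ), hi⟩ : Fin n) = u := huniq _ (h1.trans hjh)
          have eJ : (⟨(j : ℕ), hj⟩ : Fin n) = u := huniq _ hjh
          have : (i : ℕ) = (j : ℕ) := by
            have := eI.trans eJ.symm
            simpa [Fin.ext_iff] using this
          omega
        · constructor
          · intro hq
            rw [hja, hka] at hq
            exact absurd hlt (by rw [hq]; exact lt_irrefl a)
          · intro hq
            rw [hja, hka] at hq
            exact lt_irrefl h (hq.trans hlt)
    constructor
    · rintro ⟨i, j, k, hij, hjk, h1, h2⟩
      rcases key i j k hij hjk h1 with ⟨hf, _⟩ | ⟨i', j', k', hij', hjk', h1', ej, ek⟩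
      · exact hf h2
      · exact hA ⟨i', j', k', hij', hjk', h1', by rw [← ej, ← ek]; exact h2⟩
    · rintro ⟨i, j, k, hij, hjk, h1, h2⟩
      rcases key i j k hij hjk h1 with ⟨_, hf⟩ | ⟨i', j', k', hij', hjk', h1', ej, ek⟩
      · exact hf h2
      · exact hB ⟨i', j', k', hij', hjk', h1', by rw [← ej, ← ek]; exact h2⟩
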